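/- Under the Setup with Hypothesis (H2), for every w ∈ adh(L) and every ℓ ≥ 0, the prefix w[0,ℓ−1] belongs to centre(L) ∩ Σ^ℓ, and the sequence (α_{w[0,ℓ−1]})_{ℓ≥1} is nondecreasing, bounded above by 1, and hence converges as ℓ → ∞. -/

import Mathlib

open Filter Topology

/-- The prefix of length `ℓ` of an infinite word `w : ℕ → A`. -/
def prefixOf {A : Type*} (w : ℕ → A) (ℓ : ℕ) : List A := List.ofFn (fun i : Fin ℓ => w i)

/-- The set of prefixes of words of a language `L`. -/
def pref {A : Type*} (L : Set (List A)) : Set (List A) := {u | ∃ v ∈ L, u <+: v}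

/-- The adherence of a language. -/
def adh {A : Type*} (L : Set (List A)) : Set (ℕ → A) :=
  {w | ∀ ℓ : ℕ, prefixOf w ℓ ∈ pref L}

/-- The center of a language: the finite prefixes of elements of the adherence. -/
def centre {A : Type*} (L : Set (List A)) : Set (List A) :=
  {u | ∃ w ∈ adh L, u = prefixOf w u.length}

/-- Transition function of a deterministic automaton extended to words. -/
def deltaStar {Q A : Type*} (δ : Q → A → Q) (q : Q) (w : List A) : Q := w.foldl δ q

/-- `ucomp δ F q n` : number of words of length `n` accepted from state `q`. -/
noncomputable def ucomp {Q A : Type*} (δ : Q → A → Q) (F : Set Q) (q : Q) (n : ℕ) : ℕ :=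
  {z : List A | z.length = n ∧ deltaStar δ q z ∈ F}.ncard

/-- `vcomp δ F q n` : number of words of length at most `n` accepted from state `q`. -/
noncomputable def vcomp {Q A : Type*} (δ : Q → A → Q) (F : Set Q) (q : Q) (n : ℕ) : ℕ :=
  ∑ m ∈ Finset.range (n + 1), ucomp δ F q m

open scoped Classical in
/-- For a word `y`, `alphaFin L r y = s₀ + Σ_{x ∈ centre(L), |x| = |y|, x <_lex y} r x`
where `s₀ = 1 - r ε`.  (Words of length `|y|` are enumerated as `List.ofFn f`
for `f : Fin |y| → A`.) -/
noncomputable def alphaFin {A : Type*} [Fintype A] [LinearOrder A]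
    (L : Set (List A)) (r : List A → ℝ) (y : List A) : ℝ :=
  (1 - r []) +
    ∑ f : Fin y.length → A,
      if List.ofFn f ∈ centre L ∧ List.Lex (· < ·) (List.ofFn f) y then r (List.ofFn f)
      else 0

/-!
`r` behaves like a measure on cylinders: splitting the words of length `n - |x|` by their first
letter gives `r x = Σ_a r (x a)`, and `r x = 0` when `x ∉ centre L`, since then by König's lemma
no word of some fixed length extends `x` inside `L`. Hence the words of any fixed length carry
total mass `r ε`, so `α_y ≤ 1`; and each `x <_lex y` in the centre passes its whole mass to its
one-letter extensions in the centre, all of which are `<_lex y b`, so `α_y ≤ α_{y b}`.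
A bounded monotone sequence converges.
-/

section Words

variable {A : Type*}

@[simp]
lemma prefixOf_length (w : ℕ → A) (ℓ : ℕ) : (prefixOf w ℓ).length = ℓ := by
  simp [prefixOf]

lemma prefixOf_succ (w : ℕ → A) (ℓ : ℕ) : prefixOf w (ℓ + 1) = prefixOf w ℓ ++ [w ℓ] := by
  rw [prefixOf, List.ofFn_succ_last]
  rfl

lemma prefixOf_prefix_prefixOf (w : ℕ → A) {j k : ℕ} (h : j ≤ k) :
    prefixOf w j <+: prefixOf w k := by
  induction k, h using Nat.le_induction with
  | base => exact List.prefix_refl _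
  | succ k _ ih => exact ih.trans (prefixOf_succ w k ▸ List.prefix_append _ _)

lemma prefixOf_getD (d : A) (l : List A) {n : ℕ} (h : n ≤ l.length) :
    prefixOf (fun i => l.getD i d) n = l.take n := by
  apply List.ext_getElem (by simp [h])
  intro i hi _
  simp only [prefixOf, List.length_ofFn] at hi
  simp [prefixOf, List.getD_getElem?, show i < l.length by omega]

lemma List.Lex.append_of_length_eq [LT A] {x y : List A} (h : List.Lex (· < ·) x y)
    (hlen : x.length = y.length) (s t : List A) : List.Lex (· < ·) (x ++ s) (y ++ t) := by
  induction h with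
  | nil => simp at hlen
  | cons _ ih => exact .cons (ih (by simpa using hlen))
  | rel hab => exact .rel hab

lemma Fintype.sum_ofFn_succ [Fintype A] {M : Type*} [AddCommMonoid M] {n : ℕ}
    (G : List A → M) :
    ∑ f : Fin (n + 1) → A, G (List.ofFn f) = ∑ a : A, ∑ g : Fin n → A, G (a :: List.ofFn g) := by
  rw [← (Fin.consEquiv fun _ => A).sum_comp, Fintype.sum_prod_type]
  simp [Fin.consEquiv, List.ofFn_succ]

lemma Fintype.sum_ofFn_succ_last [Fintype A] {M : Type*} [AddCommMonoid M] {n : ℕ}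
    (G : List A → M) :
    ∑ f : Fin (n + 1) → A, G (List.ofFn f) =
      ∑ g : Fin n → A, ∑ a : A, G (List.ofFn g ++ [a]) := by
  rw [← (Fin.snocEquiv fun _ => A).sum_comp, Fintype.sum_prod_type, Finset.sum_comm]
  simp only [Fin.snocEquiv, Equiv.coe_fn_mk, List.ofFn_succ_last, Fin.snoc_castSucc,
    Fin.snoc_last]

lemma sum_ofFn_eq_of_eq_sum_append [Fintype A] {M : Type*} [AddCommMonoid M]
    {r : List A → M} (hsplit : ∀ x, r x = ∑ a : A, r (x ++ [a])) (n : ℕ) :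
    ∑ f : Fin n → A, r (List.ofFn f) = r [] := by
  induction n with
  | zero => simp
  | succ n ih => simp only [Fintype.sum_ofFn_succ_last, ← hsplit, ih]

end Words

section Language

variable {A : Type*} {L : Set (List A)}

lemma mem_of_prefix_of_pref_eq (hpc : pref L = L) {u v : List A} (h : u <+: v) (hv : v ∈ L) :
    u ∈ L :=
  hpc ▸ ⟨v, hv, h⟩

lemma prefixOf_mem_centre {w : ℕ → A} (hw : w ∈ adh L) (ℓ : ℕ) : prefixOf w ℓ ∈ centre L :=
  ⟨w, hw, by rw [prefixOf_length]⟩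

/-- König's lemma, via compactness of `ℕ → A`. -/
lemma mem_centre_of_forall_exists_append_mem [Finite A] (hpc : pref L = L) {x : List A}
    (hx : ∀ m : ℕ, ∃ z : List A, z.length = m ∧ x ++ z ∈ L) : x ∈ centre L := by
  obtain ⟨_ | ⟨a, _⟩, hz, -⟩ := hx 1
  · simp at hz
  let _ : TopologicalSpace A := ⊥
  have _ : DiscreteTopology A := ⟨rfl⟩
  have hclosed (N : ℕ) (S : Set (List A)) : IsClosed {w : ℕ → A | prefixOf w N ∈ S} := by
    have : Continuous fun (w : ℕ → A) (i : Fin N) => w i := by fun_prop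
    exact (isClosed_discrete {f : Fin N → A | List.ofFn f ∈ S}).preimage this
  let t (m : ℕ) : Set (ℕ → A) :=
    {w | prefixOf w x.length ∈ ({x} : Set (List A))} ∩ {w | prefixOf w (x.length + m) ∈ L}
  have ht_closed (m : ℕ) : IsClosed (t m) := (hclosed _ _).inter (hclosed _ _)
  have ht_anti (m : ℕ) : t (m + 1) ⊆ t m := fun w ⟨hpre, hmem⟩ =>
    ⟨hpre, mem_of_prefix_of_pref_eq hpc (prefixOf_prefix_prefixOf w (by omega)) hmem⟩
  have ht_nonempty (m : ℕ) : (t m).Nonempty := by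
    obtain ⟨z, rfl, hz⟩ := hx m
    refine ⟨fun i => (x ++ z).getD i a, ?_, ?_⟩
    · show prefixOf _ x.length = x
      rw [prefixOf_getD _ _ (by simp), List.take_left]
    · show prefixOf _ _ ∈ L
      rwa [prefixOf_getD _ _ (by simp), List.take_of_length_le (by simp)]
  obtain ⟨w, hw⟩ := IsCompact.nonempty_iInter_of_sequence_nonempty_isCompact_isClosed
    t ht_anti ht_nonempty (ht_closed 0).isCompact ht_closed
  simp only [Set.mem_iInter] at hw
  refine ⟨w, fun ℓ => ⟨_, (hw ℓ).2, prefixOf_prefix_prefixOf w (by omega)⟩, ?_⟩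
  exact ((hw 0).1 : prefixOf w x.length = x).symm

end Language

section Automaton

variable {Q A : Type*} (δ : Q → A → Q) (F : Set Q)

@[simp]
lemma deltaStar_append (q : Q) (x y : List A) :
    deltaStar δ q (x ++ y) = deltaStar δ (deltaStar δ q x) y :=
  List.foldl_append

@[simp]
lemma deltaStar_nil (q : Q) : deltaStar δ q ([] : List A) = q :=
  rfl

@[simp]
lemma deltaStar_cons (q : Q) (a : A) (x : List A) :
    deltaStar δ q (a :: x) = deltaStar δ (δ q a) x :=
  rfl

lemma ucomp_eq_sum_ofFn [Fintype A] [DecidablePred (· ∈ F)] (q : Q) (n : ℕ) :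
    ucomp δ F q n = ∑ f : Fin n → A, if deltaStar δ q (List.ofFn f) ∈ F then 1 else 0 := by
  have hset : {z : List A | z.length = n ∧ deltaStar δ q z ∈ F}
      = List.ofFn '' {f : Fin n → A | deltaStar δ q (List.ofFn f) ∈ F} := by
    ext z
    constructor
    · rintro ⟨rfl, hz⟩
      exact ⟨z.get, by simpa using hz, List.ofFn_get z⟩
    · rintro ⟨f, hf, rfl⟩
      exact ⟨List.length_ofFn, hf⟩
  rw [ucomp, hset, Set.ncard_image_of_injective _ List.ofFn_injective,
    Set.ncard_eq_toFinset_card', Set.toFinset_ofPred, Finset.card_filter]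

lemma ucomp_succ [Fintype A] (q : Q) (n : ℕ) :
    ucomp δ F q (n + 1) = ∑ a : A, ucomp δ F (δ q a) n := by
  classical
  simp only [ucomp_eq_sum_ofFn]
  exact Fintype.sum_ofFn_succ fun z => if deltaStar δ q z ∈ F then 1 else 0

variable {δ F} {L : Set (List A)}

lemma ucomp_deltaStar_eq_zero {q0 : Q} (hL : L = {x | deltaStar δ q0 x ∈ F}) (hpc : pref L = L)
    {x : List A} {m k : ℕ} (hm : ∀ z : List A, z.length = m → x ++ z ∉ L) (hk : m ≤ k) :
    ucomp δ F (deltaStar δ q0 x) k = 0 := by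
  rw [ucomp, ← Set.ncard_empty (List A)]
  congr 1
  refine Set.eq_empty_of_forall_notMem ?_
  rintro z ⟨hzk, hzF⟩
  refine hm (z.take m) (by simp; omega) ?_
  have hxz : x ++ z ∈ L := by
    rw [hL]
    simpa using hzF
  exact mem_of_prefix_of_pref_eq hpc ((List.prefix_append_right_inj x).2 (z.take_prefix m)) hxz

variable (δ F)

/-- The ratio of Hypothesis (H2), whose limit is `r_x`. -/
noncomputable def acceptRatio (q0 : Q) (x : List A) (n : ℕ) : ℝ :=
  (ucomp δ F (deltaStar δ q0 x) (n - x.length) : ℝ) / (vcomp δ F q0 n : ℝ)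

variable (q0 : Q)

lemma acceptRatio_nonneg (x : List A) (n : ℕ) : 0 ≤ acceptRatio δ F q0 x n := by
  unfold acceptRatio
  positivity

lemma acceptRatio_eq_sum_append [Fintype A] {x : List A} {n : ℕ} (hn : x.length < n) :
    acceptRatio δ F q0 x n = ∑ a : A, acceptRatio δ F q0 (x ++ [a]) n := by
  obtain ⟨k, hk⟩ : ∃ k, n - x.length = k + 1 := ⟨n - x.length - 1, by omega⟩
  have hk' : n - (x.length + 1) = k := by omega
  simp only [acceptRatio, hk, ucomp_succ, Nat.cast_sum, Finset.sum_div, deltaStar_append,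
    List.length_append, List.length_singleton, hk', deltaStar_cons, deltaStar_nil]

end Automaton

section Limit

variable {Q A : Type*} {δ : Q → A → Q} {F : Set Q} {q0 : Q}

lemma limit_acceptRatio_nonneg {x : List A} {c : ℝ}
    (hc : Tendsto (acceptRatio δ F q0 x) atTop (𝓝 c)) : 0 ≤ c :=
  ge_of_tendsto' hc (acceptRatio_nonneg δ F q0 x)

lemma limit_acceptRatio_eq_sum_append [Fintype A] {r : List A → ℝ}
    (hr : ∀ y, Tendsto (acceptRatio δ F q0 y) atTop (𝓝 (r y))) (x : List A) :
    r x = ∑ a : A, r (x ++ [a]) :=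
  tendsto_nhds_unique (hr x) <| (tendsto_finsetSum _ fun a _ => hr (x ++ [a])).congr' <|
    eventually_atTop.2 ⟨x.length + 1, fun _ hn => (acceptRatio_eq_sum_append δ F q0 hn).symm⟩

lemma limit_acceptRatio_eq_zero [Finite A] {L : Set (List A)}
    (hL : L = {x | deltaStar δ q0 x ∈ F}) (hpc : pref L = L) {x : List A} (hx : x ∉ centre L)
    {c : ℝ} (hc : Tendsto (acceptRatio δ F q0 x) atTop (𝓝 c)) : c = 0 := by
  obtain ⟨m, hm⟩ : ∃ m, ∀ z : List A, z.length = m → x ++ z ∉ L := by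
    by_contra! h
    exact hx (mem_centre_of_forall_exists_append_mem hpc h)
  refine tendsto_nhds_unique hc <| tendsto_const_nhds.congr' <|
    eventually_atTop.2 ⟨x.length + m, fun n hn => ?_⟩
  simp [acceptRatio, ucomp_deltaStar_eq_zero hL hpc hm (show m ≤ n - x.length by omega)]

end Limit

section Alpha

open scoped Classical

variable {A : Type*} [Fintype A] [LinearOrder A] {L : Set (List A)} {r : List A → ℝ}

lemma alphaFin_eq_of_length_eq (y : List A) {n : ℕ} (hy : y.length = n) :
    alphaFin L r y = (1 - r []) + ∑ f : Fin n → A,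
      if List.ofFn f ∈ centre L ∧ List.Lex (· < ·) (List.ofFn f) y then r (List.ofFn f)
      else 0 := by
  subst hy
  rfl

lemma alphaFin_le_one (hr0 : ∀ x, 0 ≤ r x) (hsplit : ∀ x, r x = ∑ a : A, r (x ++ [a]))
    (y : List A) : alphaFin L r y ≤ 1 := by
  have hsum : ∑ f : Fin y.length → A,
      (if List.ofFn f ∈ centre L ∧ List.Lex (· < ·) (List.ofFn f) y then r (List.ofFn f)
        else 0) ≤ r [] := by
    rw [← sum_ofFn_eq_of_eq_sum_append hsplit y.length]
    gcongr with f
    split_ifs <;> simp [hr0]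
  rw [alphaFin]
  linarith

lemma ite_mem_centre_lex_le_sum_append (hr0 : ∀ x, 0 ≤ r x)
    (hsplit : ∀ x, r x = ∑ a : A, r (x ++ [a]))
    (hzero : ∀ x ∉ centre L, r x = 0) {x y : List A}
    (hlen : x.length = y.length) (b : A) :
    (if x ∈ centre L ∧ List.Lex (· < ·) x y then r x else 0) ≤
      ∑ a : A, if x ++ [a] ∈ centre L ∧ List.Lex (· < ·) (x ++ [a]) (y ++ [b]) then r (x ++ [a])
        else 0 := by
  split_ifs with hx
  · rw [hsplit x]
    refine (Finset.sum_congr rfl fun a _ => ?_).le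
    by_cases hxa : x ++ [a] ∈ centre L
    · rw [if_pos ⟨hxa, hx.2.append_of_length_eq hlen _ _⟩]
    · rw [if_neg fun h => hxa h.1, hzero _ hxa]
  · exact Finset.sum_nonneg fun a _ => by split_ifs <;> simp [hr0]

lemma alphaFin_le_alphaFin_append_singleton (hr0 : ∀ x, 0 ≤ r x)
    (hsplit : ∀ x, r x = ∑ a : A, r (x ++ [a])) (hzero : ∀ x ∉ centre L, r x = 0)
    (y : List A) (b : A) : alphaFin L r y ≤ alphaFin L r (y ++ [b]) := by
  rw [alphaFin_eq_of_length_eq (y ++ [b]) (n := y.length + 1) (by simp), alphaFin,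
    Fintype.sum_ofFn_succ_last fun z =>
      if z ∈ centre L ∧ List.Lex (· < ·) z (y ++ [b]) then r z else 0]
  gcongr with f
  exact ite_mem_centre_lex_le_sum_append hr0 hsplit hzero (by simp) b

end Alpha

theorem stmt_12_general {Γ : Type*} [Fintype Γ] [LinearOrder Γ]
    (L : Set (List Γ)) (hpc : pref L = L)
    {Q : Type*} (q0 : Q) (δ : Q → Γ → Q) (F : Set Q)
    (hL : L = {x | deltaStar δ q0 x ∈ F})
    (r : List Γ → ℝ)
    (hH2 : ∀ x : List Γ,
      Tendsto (fun n : ℕ =>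
          (ucomp δ F (deltaStar δ q0 x) (n - x.length) : ℝ) / (vcomp δ F q0 n : ℝ))
        atTop (𝓝 (r x)))
    (w : ℕ → Γ) (hw : w ∈ adh L) :
    (∀ ℓ : ℕ, prefixOf w ℓ ∈ centre L ∧ (prefixOf w ℓ).length = ℓ) ∧
    Monotone (fun ℓ : ℕ => alphaFin L r (prefixOf w ℓ)) ∧
    (∀ ℓ : ℕ, alphaFin L r (prefixOf w ℓ) ≤ 1) ∧
    ∃ x : ℝ, Tendsto (fun ℓ : ℕ => alphaFin L r (prefixOf w ℓ)) atTop (𝓝 x) := by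
  have hr (x : List Γ) : Tendsto (acceptRatio δ F q0 x) atTop (𝓝 (r x)) := hH2 x
  have hr0 (x : List Γ) : 0 ≤ r x := limit_acceptRatio_nonneg (hr x)
  have hsplit : ∀ x, r x = ∑ a : Γ, r (x ++ [a]) := limit_acceptRatio_eq_sum_append hr
  have hzero (x : List Γ) (hx : x ∉ centre L) : r x = 0 :=
    limit_acceptRatio_eq_zero hL hpc hx (hr x)
  have hmono : Monotone fun ℓ => alphaFin L r (prefixOf w ℓ) :=
    monotone_nat_of_le_succ fun ℓ => by
      simpa only [prefixOf_succ] using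
        alphaFin_le_alphaFin_append_singleton hr0 hsplit hzero _ (w ℓ)
  have hle (ℓ : ℕ) : alphaFin L r (prefixOf w ℓ) ≤ 1 := alphaFin_le_one hr0 hsplit _
  exact ⟨fun ℓ => ⟨prefixOf_mem_centre hw ℓ, prefixOf_length w ℓ⟩, hmono, hle, _,
    tendsto_atTop_ciSup hmono ⟨1, Set.forall_mem_range.2 hle⟩⟩

theorem stmt_12 {Γ : Type*} [Fintype Γ] [LinearOrder Γ]
    (L : Set (List Γ)) (hLinf : L.Infinite) (hpc : pref L = L)
    {Q : Type*} (q0 : Q) (δ : Q → Γ → Q) (F : Set Q)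
    (hacc : ∀ q : Q, ∃ x : List Γ, deltaStar δ q0 x = q)
    (hL : L = {x | deltaStar δ q0 x ∈ F})
    (r : List Γ → ℝ)
    (hH2 : ∀ x : List Γ,
      Tendsto (fun n : ℕ =>
          (ucomp δ F (deltaStar δ q0 x) (n - x.length) : ℝ) / (vcomp δ F q0 n : ℝ))
        atTop (𝓝 (r x)))
    (w : ℕ → Γ) (hw : w ∈ adh L) :
    (∀ ℓ : ℕ, prefixOf w ℓ ∈ centre L ∧ (prefixOf w ℓ).length = ℓ) ∧
    Monotone (fun ℓ : ℕ => alphaFin L r (prefixOf w ℓ)) ∧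
    (∀ ℓ : ℕ, alphaFin L r (prefixOf w ℓ) ≤ 1) ∧
    ∃ x : ℝ, Tendsto (fun ℓ : ℕ => alphaFin L r (prefixOf w ℓ)) atTop (𝓝 x) :=
  stmt_12_general L hpc q0 δ F hL r hH2 w hw
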